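/- Let D be a reduced pipe dream, (i,j) a movable cross tile, a = max_bump_row_{ij}(D) > h_{ij}(D), and (p,q) a ladder movable cross tile with a < p < i and q = k = k_{ij}(D). Then M_{aj}(L_{pk}(D)) = L_{pk}(M_{aj}(D)); that is, the move at (a,j) commutes with the ladder move at (p,k). -/

import Mathlib

open Finset

/-- A pipe dream is encoded as a tiling of the (1-indexed) grid:
`true` = cross tile (+), `false` = bump tile (•). -/
abbrev PipeDream := ℕ × ℕ → Bool

namespace PipeDream

/-- All cross tiles lie in the staircase {(i,j) | 1 ≤ i, 1 ≤ j, i+j ≤ n+1}. -/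
def InStaircase (n : ℕ) (D : PipeDream) : Prop :=
  ∀ i j, D (i, j) = true → 1 ≤ i ∧ 1 ≤ j ∧ i + j ≤ n + 1

/-- Reading word: rows top to bottom, within each row right to left; a cross at
(i,j) contributes the simple transposition s_{i+j-1}. -/
def word (n : ℕ) (D : PipeDream) : List ℕ :=
  (List.range n).flatMap (fun i =>
    ((List.range n).reverse.filterMap (fun j =>
      if D (i + 1, j + 1) = true then some (i + j + 1) else none)))

/-- The permutation of ℕ realized by the wires of the pipe dream. -/
def perm (n : ℕ) (D : PipeDream) : Equiv.Perm ℕ :=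
  (List.map (fun k => Equiv.swap k (k + 1)) (word n D)).prod

def crossCount (n : ℕ) (D : PipeDream) : ℕ := (word n D).length

/-- Number of inversions of w among 1..n (the Coxeter length of w ∈ S_n). -/
def invCount (w : Equiv.Perm ℕ) (n : ℕ) : ℕ :=
  (((Finset.Icc 1 n) ×ˢ (Finset.Icc 1 n)).filter
    (fun p => p.1 < p.2 ∧ w p.2 < w p.1)).card

/-- Reduced pipe dreams for w ∈ S_n: crosses in the staircase, wires realize w,
and no two wires cross twice (equivalently, #crosses = ℓ(w)). -/
def RPD (n : ℕ) (w : Equiv.Perm ℕ) : Set PipeDream :=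
  {D | InStaircase n D ∧ perm n D = w ∧ crossCount n D = invCount w n}

/-- (i,j) is a movable cross tile: a cross with a bump above it in column j. -/
def Movable (D : PipeDream) (i j : ℕ) : Prop :=
  D (i, j) = true ∧ ∃ h, 1 ≤ h ∧ h < i ∧ D (h, j) = false

/-- h_{ij}(D): largest h ∈ [1,i-1] with a bump at (h,j). -/
def hIdx (D : PipeDream) (i j : ℕ) : ℕ :=
  ((Finset.Ico 1 i).filter (fun h => D (h, j) = false)).sup id

/-- k_{ij}(D): least k ∈ [j+1,n] with a bump at (i,k). -/
def kIdx (n : ℕ) (D : PipeDream) (i j : ℕ) : ℕ :=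
  WithTop.untopD 0 (((Finset.Icc (j + 1) n).filter (fun k => D (i, k) = false)).min)

/-- Rect_{ij}(D) = [h,i] × [j,k]. -/
def Rect (n : ℕ) (D : PipeDream) (i j : ℕ) : Finset (ℕ × ℕ) :=
  Finset.Icc (hIdx D i j, j) (i, kIdx n D i j)

/-- max_bump_row_{ij}(D): largest p ∈ [h,i) whose row contains a bump tile in Rect. -/
def maxBumpRow (n : ℕ) (D : PipeDream) (i j : ℕ) : ℕ :=
  ((Finset.Ico (hIdx D i j) i).filter
    (fun p => ∃ q ∈ Finset.Icc j (kIdx n D i j), D (p, q) = false)).sup id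

/-- min_bump_col_{ij}(D): least q ∈ (j,k] whose column contains a bump tile in Rect. -/
def minBumpCol (n : ℕ) (D : PipeDream) (i j : ℕ) : ℕ :=
  WithTop.untopD 0
    (((Finset.Icc (j + 1) (kIdx n D i j)).filter
      (fun q => ∃ p ∈ Finset.Icc (hIdx D i j) i, D (p, q) = false)).min)

/-- (i,j) is ladder movable: the bumps of Rect_{ij}(D) are exactly the three
corners (h,j), (h,k), (i,k). -/
def LadderMovable (n : ℕ) (D : PipeDream) (i j : ℕ) : Prop :=
  Movable D i j ∧
    ∀ p q, (p, q) ∈ Rect n D i j →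
      (D (p, q) = false ↔
        ((p, q) = (hIdx D i j, j) ∨ (p, q) = (hIdx D i j, kIdx n D i j) ∨
          (p, q) = (i, kIdx n D i j)))

/-- Generalized ladder move L_{ij}: swap the cross at (i,j) with the bump at (h,k). -/
def ladderMove (n : ℕ) (D : PipeDream) (i j : ℕ) : PipeDream :=
  fun st =>
    if st = (i, j) then false
    else if st = (hIdx D i j, kIdx n D i j) then true
    else D st

/-- One covering step of the ladder-move order on RPD(w). -/
def LadderStep (n : ℕ) (D Q : PipeDream) : Prop :=
  ∃ i j, LadderMovable n D i j ∧ Q = ladderMove n D i j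

/-- D ≤ Q in the ladder-move order (Q is obtained from D by a possibly empty
sequence of generalized ladder moves). -/
def ladderLE (n : ℕ) (D Q : PipeDream) : Prop :=
  Relation.ReflTransGen (LadderStep n) D Q

/-- One ladder-move step performed at a position northeast of (i,j). -/
def LadderStepNE (n i j : ℕ) (D Q : PipeDream) : Prop :=
  ∃ p q, p ≤ i ∧ j ≤ q ∧ LadderMovable n D p q ∧ Q = ladderMove n D p q

/-- V_{ij}(D): pipe dreams reachable from D by ladder moves at positions
northeast of (i,j), having a bump at (i,j). -/
def V (n : ℕ) (D : PipeDream) (i j : ℕ) : Set PipeDream :=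
  {Q | Relation.ReflTransGen (LadderStepNE n i j) D Q ∧ Q (i, j) = false}

/-- Auxiliary construction of Path_{ij}(D), with fuel (the row number strictly
decreases at each step, so fuel `i` always suffices). -/
def pathAux (n : ℕ) (D : PipeDream) (j : ℕ) : ℕ → ℕ × ℕ → Finset (ℕ × ℕ)
  | 0, _ => ∅
  | fuel + 1, (p, q) =>
      let p' := maxBumpRow n D p j
      let q' := WithTop.untopD j
        (((Finset.Icc j n).filter (fun t => D (p', t) = false)).min)
      let seg := ((Finset.Icc p' p).image fun r => (r, q)) ∪
        ((Finset.Icc q' q).image fun t => (p', t))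
      if q' = j then seg else seg ∪ pathAux n D j fuel (p', q')

/-- Path_{ij}(D): the lattice path from (i, k_{ij}(D)) to (h_{ij}(D), j). -/
def Path (n : ℕ) (D : PipeDream) (i j : ℕ) : Finset (ℕ × ℕ) :=
  pathAux n D j i (i, kIdx n D i j)

open scoped Classical in
/-- Shape_{ij}(D): tiles of Rect_{ij}(D) weakly below Path_{ij}(D). -/
noncomputable def Shape (n : ℕ) (D : PipeDream) (i j : ℕ) : Finset (ℕ × ℕ) :=
  (Rect n D i j).filter fun st => ∃ p' ≤ st.1, (p', st.2) ∈ Path n D i j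

/-- The move operation M_{ij} of Definition 3.4, written with fuel:
(i) if max_bump_row = h and min_bump_col = k, apply the ladder move L_{ij};
(ii) if max_bump_row = a > h, recurse as M_{ij} ∘ M_{aj};
(iii) otherwise recurse as M_{ij} ∘ M_{ib} with b = min_bump_col. -/
def moveAux (n : ℕ) : ℕ → PipeDream → ℕ → ℕ → PipeDream
  | 0, D, _, _ => D
  | fuel + 1, D, i, j =>
      if maxBumpRow n D i j = hIdx D i j ∧ minBumpCol n D i j = kIdx n D i j then
        ladderMove n D i j
      else if hIdx D i j < maxBumpRow n D i j then
        moveAux n fuel (moveAux n fuel D (maxBumpRow n D i j) j) i j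
      else
        moveAux n fuel (moveAux n fuel D i (minBumpCol n D i j)) i j

/-- The move operation M_{ij}.  The fuel `(n+2)^(n+2)` vastly exceeds the depth
of the recursion of Definition 3.4, so `move` agrees with M on all inputs for
which the recursion makes sense. -/
def move (n : ℕ) (D : PipeDream) (i j : ℕ) : PipeDream :=
  moveAux n ((n + 2) ^ (n + 2)) D i j

/-- (p,q) is northeast of (i,j). -/
def NorthEastOf (p q i j : ℕ) : Prop := p ≤ i ∧ j ≤ q

/-- (i,j) and (p,q) are southwest-incomparable. -/
def SWIncomparable (i j p q : ℕ) : Prop := (i < p ∧ j < q) ∨ (p < i ∧ q < j)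

end PipeDream

namespace Stmt19Aux

open PipeDream Finset

/-! ### Generic helpers about `Finset.min`/`Finset.sup` through `untop'` -/

lemma min_untop'_le {S : Finset ℕ} {q : ℕ} (hq : q ∈ S) :
    WithTop.untopD 0 S.min ≤ q := by
  obtain ⟨b, hb⟩ := Finset.min_of_mem hq
  have h2 := Finset.min_le hq
  rw [hb] at h2 ⊢
  rw [WithTop.untopD_coe]
  exact_mod_cast h2

lemma min_untop'_mem {S : Finset ℕ} (h : S.Nonempty) :
    WithTop.untopD 0 S.min ∈ S := by
  obtain ⟨a, ha⟩ := h
  obtain ⟨b, hb⟩ := Finset.min_of_mem ha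
  rw [hb, WithTop.untopD_coe]
  exact Finset.mem_of_min hb

lemma sup_id_mem {S : Finset ℕ} (h : S.sup id ≠ 0) : S.sup id ∈ S := by
  rcases S.eq_empty_or_nonempty with rfl | hne
  · simp at h
  · obtain ⟨b, hb, he⟩ := Finset.exists_mem_eq_sup S hne id
    rw [he]; exact hb

/-! ### Basic facts about the index functions -/

lemma hIdx_le (X : PipeDream) (r c : ℕ) : hIdx X r c ≤ r := by
  apply Finset.sup_le
  intro s hs
  simp only [Finset.mem_filter, Finset.mem_Ico] at hs
  exact le_of_lt hs.1.2

lemma hIdx_lt (X : PipeDream) {r : ℕ} (c : ℕ) (hr : 1 ≤ r) : hIdx X r c < r := by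
  apply (Finset.sup_lt_iff (show (⊥ : ℕ) < r from hr)).mpr
  intro s hs
  simp only [Finset.mem_filter, Finset.mem_Ico] at hs
  exact hs.1.2

lemma le_hIdx {X : PipeDream} {r c s : ℕ} (h1 : 1 ≤ s) (h2 : s < r)
    (h3 : X (s, c) = false) : s ≤ hIdx X r c := by
  refine Finset.le_sup (f := id) ?_
  simp only [Finset.mem_filter, Finset.mem_Ico]
  exact ⟨⟨h1, h2⟩, h3⟩

lemma hIdx_mem {X : PipeDream} {r c : ℕ} (h : hIdx X r c ≠ 0) :
    1 ≤ hIdx X r c ∧ hIdx X r c < r ∧ X (hIdx X r c, c) = false := by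
  have := sup_id_mem (S := (Finset.Ico 1 r).filter (fun s => X (s, c) = false)) h
  simp only [Finset.mem_filter, Finset.mem_Ico] at this
  exact ⟨this.1.1, this.1.2, this.2⟩

lemma kIdx_le {n : ℕ} {X : PipeDream} {r c q : ℕ} (h1 : c < q) (h2 : q ≤ n)
    (h3 : X (r, q) = false) : kIdx n X r c ≤ q := by
  refine min_untop'_le ?_
  simp only [Finset.mem_filter, Finset.mem_Icc]
  exact ⟨⟨h1, h2⟩, h3⟩

lemma kIdx_mem {n : ℕ} {X : PipeDream} {r c : ℕ}
    (h : ∃ q, c < q ∧ q ≤ n ∧ X (r, q) = false) :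
    c < kIdx n X r c ∧ kIdx n X r c ≤ n ∧ X (r, kIdx n X r c) = false := by
  obtain ⟨q, h1, h2, h3⟩ := h
  have : kIdx n X r c ∈ (Finset.Icc (c + 1) n).filter (fun t => X (r, t) = false) := by
    refine min_untop'_mem ⟨q, ?_⟩
    simp only [Finset.mem_filter, Finset.mem_Icc]
    exact ⟨⟨h1, h2⟩, h3⟩
  simp only [Finset.mem_filter, Finset.mem_Icc] at this
  exact ⟨this.1.1, this.1.2, this.2⟩

lemma maxBumpRow_le (n : ℕ) (X : PipeDream) (r c : ℕ) : maxBumpRow n X r c ≤ r := by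
  apply Finset.sup_le
  intro s hs
  simp only [Finset.mem_filter, Finset.mem_Ico] at hs
  exact le_of_lt hs.1.2

lemma le_maxBumpRow {n : ℕ} {X : PipeDream} {r c s q : ℕ}
    (h1 : hIdx X r c ≤ s) (h2 : s < r) (h3 : c ≤ q) (h4 : q ≤ kIdx n X r c)
    (h5 : X (s, q) = false) : s ≤ maxBumpRow n X r c := by
  refine Finset.le_sup (f := id) ?_
  simp only [Finset.mem_filter, Finset.mem_Ico, Finset.mem_Icc]
  exact ⟨⟨h1, h2⟩, q, ⟨h3, h4⟩, h5⟩

lemma maxBumpRow_mem {n : ℕ} {X : PipeDream} {r c : ℕ} (h : maxBumpRow n X r c ≠ 0) :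
    (hIdx X r c ≤ maxBumpRow n X r c ∧ maxBumpRow n X r c < r) ∧
      ∃ q, c ≤ q ∧ q ≤ kIdx n X r c ∧ X (maxBumpRow n X r c, q) = false := by
  have := sup_id_mem (S := (Finset.Ico (hIdx X r c) r).filter
    (fun s => ∃ q ∈ Finset.Icc c (kIdx n X r c), X (s, q) = false)) h
  simp only [Finset.mem_filter, Finset.mem_Ico, Finset.mem_Icc] at this
  obtain ⟨⟨h1, h2⟩, q, ⟨h3, h4⟩, h5⟩ := this
  exact ⟨⟨h1, h2⟩, q, h3, h4, h5⟩

lemma minBumpCol_le {n : ℕ} {X : PipeDream} {r c q s : ℕ}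
    (h1 : c < q) (h2 : q ≤ kIdx n X r c) (h3 : hIdx X r c ≤ s) (h4 : s ≤ r)
    (h5 : X (s, q) = false) : minBumpCol n X r c ≤ q := by
  refine min_untop'_le ?_
  simp only [Finset.mem_filter, Finset.mem_Icc]
  exact ⟨⟨h1, h2⟩, s, ⟨h3, h4⟩, h5⟩

lemma minBumpCol_mem {n : ℕ} {X : PipeDream} {r c : ℕ}
    (h : ∃ q s, c < q ∧ q ≤ kIdx n X r c ∧ hIdx X r c ≤ s ∧ s ≤ r ∧ X (s, q) = false) :
    c < minBumpCol n X r c ∧ minBumpCol n X r c ≤ kIdx n X r c ∧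
      ∃ s, hIdx X r c ≤ s ∧ s ≤ r ∧ X (s, minBumpCol n X r c) = false := by
  obtain ⟨q, s, h1, h2, h3, h4, h5⟩ := h
  have : minBumpCol n X r c ∈ (Finset.Icc (c + 1) (kIdx n X r c)).filter
      (fun t => ∃ u ∈ Finset.Icc (hIdx X r c) r, X (u, t) = false) := by
    refine min_untop'_mem ⟨q, ?_⟩
    simp only [Finset.mem_filter, Finset.mem_Icc]
    exact ⟨⟨h1, h2⟩, s, ⟨h3, h4⟩, h5⟩
  simp only [Finset.mem_filter, Finset.mem_Icc] at this
  obtain ⟨⟨h6, h7⟩, u, ⟨h8, h9⟩, h10⟩ := this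
  exact ⟨h6, h7, u, h8, h9, h10⟩

end Stmt19Aux

namespace Stmt19Aux

open PipeDream Finset

/-- The two-tile patch corresponding to the ladder move at `(p,k)`:
flip `(p,k)` to a bump and `(A,kp)` to a cross. -/
def patchD (p k A kp : ℕ) (X : PipeDream) : PipeDream :=
  fun st => if st = (p, k) then false else if st = (A, kp) then true else X st

/-- The protection invariant maintained throughout the recursion of `moveAux`. -/
def ProtD (p k A kp : ℕ) (X : PipeDream) : Prop :=
  X (A, k) = false ∧ X (A, kp) = false ∧ ∀ s, A < s → s < p → X (s, k) = true

lemma patch_eq (p k A kp : ℕ) (X : PipeDream) {s t : ℕ} (hs : s < p) (ht : t < kp) :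
    patchD p k A kp X (s, t) = X (s, t) := by
  unfold patchD
  rw [if_neg, if_neg]
  · simp only [Prod.mk.injEq, not_and]; intro _ h2; omega
  · simp only [Prod.mk.injEq, not_and]; intro h1; omega

/-- `moveAux` at `(r,c)` never modifies a tile in a row strictly below `r`. -/
lemma moveAux_rows (n : ℕ) : ∀ (fuel : ℕ) (X : PipeDream) (r c s t : ℕ), r < s →
    moveAux n fuel X r c (s, t) = X (s, t) := by
  intro fuel
  induction fuel with
  | zero => intro X r c s t _; rfl
  | succ fuel IH =>
    intro X r c s t hrs
    simp only [moveAux]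
    split
    · unfold ladderMove
      rw [if_neg, if_neg]
      · simp only [Prod.mk.injEq, not_and]
        intro h1
        have := hIdx_le X r c; omega
      · simp only [Prod.mk.injEq, not_and]
        intro h1; omega
    · split
      · rw [IH _ r c s t hrs, IH _ (maxBumpRow n X r c) c s t
          (lt_of_le_of_lt (maxBumpRow_le n X r c) hrs)]
      · rw [IH _ r c s t hrs, IH _ r (minBumpCol n X r c) s t hrs]

/-! ### Patch-insensitivity of the four index functions -/

variable {n p A k kp : ℕ}

lemma hIdx_patch (p k A kp : ℕ) (X : PipeDream) {r c : ℕ} (hr : r ≤ p) (hc : c < kp) :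
    hIdx (patchD p k A kp X) r c = hIdx X r c := by
  unfold hIdx
  congr 1
  apply Finset.filter_congr
  intro s hs
  simp only [Finset.mem_Ico] at hs
  rw [patch_eq p k A kp X (by omega) hc]

lemma kIdx_patch (hAp : A < p) (hkkp : k < kp) (hkn : k ≤ n) (X : PipeDream)
    {r c : ℕ} (hr : r < p) (hc : c < k) (hAk : X (A, k) = false) :
    kIdx n (patchD p k A kp X) r c = kIdx n X r c := by
  by_cases hrA : r = A
  · set S := (Finset.Icc (c + 1) n).filter (fun t => X (r, t) = false) with hS
    have hSk : k ∈ S := by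
      simp only [hS, Finset.mem_filter, Finset.mem_Icc]
      refine ⟨⟨by omega, hkn⟩, ?_⟩
      rw [hrA]; exact hAk
    have hS' : (Finset.Icc (c + 1) n).filter
        (fun t => patchD p k A kp X (r, t) = false) = S.erase kp := by
      ext t
      simp only [hS, Finset.mem_erase, Finset.mem_filter, Finset.mem_Icc]
      by_cases htkp : t = kp
      · have hv : patchD p k A kp X (r, t) = true := by
          unfold patchD
          rw [if_neg (by simp only [Prod.mk.injEq, not_and]; intro _; omega),
            if_pos (by rw [hrA, htkp])]
        rw [hv]
        simp [htkp]
      · have hv : patchD p k A kp X (r, t) = X (r, t) := by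
          unfold patchD
          rw [if_neg (by simp only [Prod.mk.injEq, not_and]; intro h; omega),
            if_neg (by simp only [Prod.mk.injEq, not_and]; intro _ h; exact htkp h)]
        rw [hv]
        tauto
    show WithTop.untopD 0 (Finset.min _) = WithTop.untopD 0 (Finset.min _)
    rw [hS', ← hS]
    have hm : WithTop.untopD 0 S.min ∈ S := min_untop'_mem ⟨k, hSk⟩
    have hmle : WithTop.untopD 0 S.min ≤ k := min_untop'_le hSk
    have hmS' : WithTop.untopD 0 S.min ∈ S.erase kp :=
      Finset.mem_erase.mpr ⟨by omega, hm⟩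
    have h1 : WithTop.untopD 0 (S.erase kp).min ≤ WithTop.untopD 0 S.min :=
      min_untop'_le hmS'
    have h2 : WithTop.untopD 0 S.min ≤ WithTop.untopD 0 (S.erase kp).min :=
      min_untop'_le (Finset.mem_of_mem_erase (min_untop'_mem ⟨_, hmS'⟩))
    omega
  · have hfil : (Finset.Icc (c + 1) n).filter
        (fun t => patchD p k A kp X (r, t) = false) =
        (Finset.Icc (c + 1) n).filter (fun t => X (r, t) = false) := by
      apply Finset.filter_congr
      intro t _
      rw [show patchD p k A kp X (r, t) = X (r, t) from by
        unfold patchD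
        rw [if_neg (by simp only [Prod.mk.injEq, not_and]; intro h; omega),
          if_neg (by simp only [Prod.mk.injEq, not_and]; intro h; exact absurd h hrA)]]
    unfold kIdx
    rw [hfil]

lemma maxBumpRow_patch (hAp : A < p) (hkkp : k < kp) (hkn : k ≤ n) (X : PipeDream)
    {r c : ℕ} (hr : r < p) (hc : c < k) (hAk : X (A, k) = false)
    (hkc : kIdx n X r c ≤ k) :
    maxBumpRow n (patchD p k A kp X) r c = maxBumpRow n X r c := by
  unfold maxBumpRow
  rw [hIdx_patch p k A kp X (le_of_lt hr) (by omega),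
    kIdx_patch hAp hkkp hkn X hr hc hAk]
  congr 1
  apply Finset.filter_congr
  intro s hs
  simp only [Finset.mem_Ico] at hs
  constructor <;> rintro ⟨q, hq1, hq2⟩ <;> refine ⟨q, hq1, ?_⟩
  · simp only [Finset.mem_Icc] at hq1
    rwa [patch_eq p k A kp X (by omega) (by omega)] at hq2
  · simp only [Finset.mem_Icc] at hq1
    rwa [patch_eq p k A kp X (by omega) (by omega)]

lemma minBumpCol_patch (hAp : A < p) (hkkp : k < kp) (hkn : k ≤ n) (X : PipeDream)
    {r c : ℕ} (hr : r < p) (hc : c < k) (hAk : X (A, k) = false)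
    (hkc : kIdx n X r c ≤ k) :
    minBumpCol n (patchD p k A kp X) r c = minBumpCol n X r c := by
  unfold minBumpCol
  rw [hIdx_patch p k A kp X (le_of_lt hr) (by omega),
    kIdx_patch hAp hkkp hkn X hr hc hAk]
  congr 2
  apply Finset.filter_congr
  intro q hq
  simp only [Finset.mem_Icc] at hq
  constructor <;> rintro ⟨s, hs1, hs2⟩ <;> refine ⟨s, hs1, ?_⟩
  · simp only [Finset.mem_Icc] at hs1
    rwa [patch_eq p k A kp X (by omega) (by omega)] at hs2
  · simp only [Finset.mem_Icc] at hs1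
    rwa [patch_eq p k A kp X (by omega) (by omega)]

end Stmt19Aux

namespace Stmt19Aux

open PipeDream Finset

lemma ladder_patch {n p A k kp : ℕ} (hAp : A < p) (hkkp : k < kp) (hkn : k ≤ n)
    (X : PipeDream) {r c : ℕ} (hr1 : 1 ≤ r) (hrp : r < p) (hck : c < k)
    (hAk : X (A, k) = false) (hkck : kIdx n X r c ≤ k) :
    ladderMove n (patchD p k A kp X) r c = patchD p k A kp (ladderMove n X r c) := by
  have hhlt : hIdx X r c < r := hIdx_lt X c hr1
  have e1 : hIdx (patchD p k A kp X) r c = hIdx X r c :=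
    hIdx_patch p k A kp X (le_of_lt hrp) (by omega)
  have e2 : kIdx n (patchD p k A kp X) r c = kIdx n X r c :=
    kIdx_patch hAp hkkp hkn X hrp hck hAk
  funext st
  obtain ⟨s, t⟩ := st
  simp only [ladderMove, patchD, e1, e2]
  by_cases h1 : ((s : ℕ), (t : ℕ)) = (r, c)
  · rw [if_pos h1,
      if_neg (by rw [h1]; simp only [Prod.mk.injEq, not_and]; intro _; omega),
      if_neg (by rw [h1]; simp only [Prod.mk.injEq, not_and]; intro _; omega),
      if_pos h1]
  · rw [if_neg h1]
    by_cases h2 : ((s : ℕ), (t : ℕ)) = (hIdx X r c, kIdx n X r c)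
    · rw [if_pos h2,
        if_neg (by rw [h2]; simp only [Prod.mk.injEq, not_and]; intro h; omega),
        if_neg (by rw [h2]; simp only [Prod.mk.injEq, not_and]; intro _; omega),
        if_neg h1, if_pos h2]
    · rw [if_neg h2]
      by_cases h3 : ((s : ℕ), (t : ℕ)) = (p, k)
      · rw [if_pos h3, if_pos h3]
      · rw [if_neg h3, if_neg h3]
        by_cases h4 : ((s : ℕ), (t : ℕ)) = (A, kp)
        · rw [if_pos h4, if_pos h4]
        · rw [if_neg h4, if_neg h4, if_neg h1, if_neg h2]

theorem key (n p A k kp : ℕ) (hAp : A < p) (hkkp : k < kp) (hkn : k ≤ n) :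
    ∀ fuel (X : PipeDream) (r c : ℕ), 1 ≤ r → r < p → c < k →
      (∃ q, c < q ∧ q ≤ k ∧ X (r, q) = false) →
      ProtD p k A kp X →
      moveAux n fuel (patchD p k A kp X) r c = patchD p k A kp (moveAux n fuel X r c) ∧
      ProtD p k A kp (moveAux n fuel X r c) ∧
      ∃ q, c ≤ q ∧ q ≤ k ∧ moveAux n fuel X r c (r, q) = false := by
  intro fuel
  induction fuel with
  | zero =>
    intro X r c hr1 hrp hck hex hP
    obtain ⟨q, h1, h2, h3⟩ := hex
    exact ⟨rfl, hP, q, le_of_lt h1, h2, h3⟩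
  | succ fuel IH =>
    intro X r c hr1 hrp hck hex hP
    obtain ⟨hPk, hPkp, hPcol⟩ := hP
    obtain ⟨q0, hq01, hq02, hq03⟩ := hex
    have hkmem := kIdx_mem (n := n) (X := X) (r := r) (c := c)
      ⟨q0, hq01, le_trans hq02 hkn, hq03⟩
    have hkck : kIdx n X r c ≤ k :=
      le_trans (kIdx_le hq01 (le_trans hq02 hkn) hq03) hq02
    have hhlt : hIdx X r c < r := hIdx_lt X c hr1
    have e1 : hIdx (patchD p k A kp X) r c = hIdx X r c :=
      hIdx_patch p k A kp X (le_of_lt hrp) (by omega)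
    have e2 : kIdx n (patchD p k A kp X) r c = kIdx n X r c :=
      kIdx_patch hAp hkkp hkn X hrp hck hPk
    have e3 : maxBumpRow n (patchD p k A kp X) r c = maxBumpRow n X r c :=
      maxBumpRow_patch hAp hkkp hkn X hrp hck hPk hkck
    have e4 : minBumpCol n (patchD p k A kp X) r c = minBumpCol n X r c :=
      minBumpCol_patch hAp hkkp hkn X hrp hck hPk hkck
    by_cases hb1 : maxBumpRow n X r c = hIdx X r c ∧ minBumpCol n X r c = kIdx n X r c
    · -- branch (i): a single ladder move
      have hL : moveAux n (fuel + 1) X r c = ladderMove n X r c := by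
        simp only [moveAux]; rw [if_pos hb1]
      have hLp : moveAux n (fuel + 1) (patchD p k A kp X) r c
          = ladderMove n (patchD p k A kp X) r c := by
        simp only [moveAux]; rw [if_pos (by rw [e1, e2, e3, e4]; exact hb1)]
      rw [hL, hLp]
      refine ⟨ladder_patch hAp hkkp hkn X hr1 hrp hck hPk hkck, ⟨?_, ?_, ?_⟩, ?_⟩
      · simp only [ladderMove]
        rw [if_neg (by simp only [Prod.mk.injEq, not_and]; intro _; omega),
          if_neg ?_]
        · exact hPk
        · simp only [Prod.mk.injEq, not_and]
          intro hA hkk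
          have h5 : X (r, k) = true := hPcol r (by omega) hrp
          have h6 : X (r, k) = false := by rw [hkk]; exact hkmem.2.2
          rw [h5] at h6; exact Bool.noConfusion h6
      · simp only [ladderMove]
        rw [if_neg (by simp only [Prod.mk.injEq, not_and]; intro _; omega),
          if_neg (by simp only [Prod.mk.injEq, not_and]; intro _; omega)]
        exact hPkp
      · intro s hs1 hs2
        simp only [ladderMove]
        rw [if_neg (by simp only [Prod.mk.injEq, not_and]; intro _; omega)]
        by_cases h2 : ((s : ℕ), (k : ℕ)) = (hIdx X r c, kIdx n X r c)
        · rw [if_pos h2]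
        · rw [if_neg h2]; exact hPcol s hs1 hs2
      · refine ⟨c, le_refl c, le_of_lt hck, ?_⟩
        simp [ladderMove]
    · by_cases hb2 : hIdx X r c < maxBumpRow n X r c
      · -- branch (ii): recurse through the row maxBumpRow
        obtain ⟨⟨hh1, hh2⟩, qa, hqa1, hqa2, hqa3⟩ :=
          maxBumpRow_mem (n := n) (X := X) (r := r) (c := c) (by omega)
        have hqac : c < qa := by
          rcases Nat.lt_or_ge c qa with h | h
          · exact h
          · have hqa_eq : qa = c := by omega
            have hqa3' := hqa3
            rw [hqa_eq] at hqa3'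
            have := le_hIdx (show 1 ≤ maxBumpRow n X r c by omega) hh2 hqa3'
            omega
        have hexa : ∃ q, c < q ∧ q ≤ k ∧ X (maxBumpRow n X r c, q) = false :=
          ⟨qa, hqac, le_trans hqa2 hkck, hqa3⟩
        obtain ⟨C1, P1, T1⟩ := IH X (maxBumpRow n X r c) c (by omega)
          (by omega) hck hexa ⟨hPk, hPkp, hPcol⟩
        have hrow : ∀ t, moveAux n fuel X (maxBumpRow n X r c) c (r, t) = X (r, t) :=
          fun t => moveAux_rows n fuel X _ c r t hh2
        have hex1 : ∃ q, c < q ∧ q ≤ k ∧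
            moveAux n fuel X (maxBumpRow n X r c) c (r, q) = false :=
          ⟨q0, hq01, hq02, by rw [hrow]; exact hq03⟩
        obtain ⟨C2, P2, T2⟩ := IH (moveAux n fuel X (maxBumpRow n X r c) c) r c
          hr1 hrp hck hex1 P1
        have hstep : moveAux n (fuel + 1) X r c
            = moveAux n fuel (moveAux n fuel X (maxBumpRow n X r c) c) r c := by
          simp only [moveAux]; rw [if_neg hb1, if_pos hb2]
        have hstepp : moveAux n (fuel + 1) (patchD p k A kp X) r c
            = moveAux n fuel (moveAux n fuel (patchD p k A kp X)
                (maxBumpRow n X r c) c) r c := by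
          simp only [moveAux]
          rw [if_neg (by rw [e1, e2, e3, e4]; exact hb1),
            if_pos (by rw [e1, e3]; exact hb2), e3]
        exact ⟨by rw [hstepp, C1, C2, hstep], hstep ▸ P2, hstep ▸ T2⟩
      · -- branch (iii): recurse through the column minBumpCol
        have hble : maxBumpRow n X r c ≤ hIdx X r c := le_of_not_gt hb2
        have hach : maxBumpRow n X r c = hIdx X r c := by
          rcases Nat.eq_zero_or_pos (hIdx X r c) with h0 | hpos
          · omega
          · obtain ⟨h1', h2', hbump⟩ := hIdx_mem (X := X) (r := r) (c := c) (by omega)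
            have := le_maxBumpRow (n := n) (le_refl (hIdx X r c)) h2'
              (le_refl c) (le_of_lt hkmem.1) hbump
            omega
        have hbck : minBumpCol n X r c ≠ kIdx n X r c := fun hEq => hb1 ⟨hach, hEq⟩
        obtain ⟨hbc1, hbc2, s0, hs01, hs02, hs03⟩ :=
          minBumpCol_mem (n := n) (X := X) (r := r) (c := c)
            ⟨kIdx n X r c, r, hkmem.1, le_refl _, le_of_lt hhlt, le_refl r, hkmem.2.2⟩
        have hbck2 : minBumpCol n X r c < k := by omega
        have hexb : ∃ q, minBumpCol n X r c < q ∧ q ≤ k ∧ X (r, q) = false :=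
          ⟨kIdx n X r c, by omega, hkck, hkmem.2.2⟩
        obtain ⟨C1, P1, T1⟩ := IH X r (minBumpCol n X r c) hr1 hrp hbck2 hexb
          ⟨hPk, hPkp, hPcol⟩
        have hex1 : ∃ q, c < q ∧ q ≤ k ∧
            moveAux n fuel X r (minBumpCol n X r c) (r, q) = false := by
          obtain ⟨q, hq1, hq2, hq3⟩ := T1
          exact ⟨q, by omega, hq2, hq3⟩
        obtain ⟨C2, P2, T2⟩ := IH (moveAux n fuel X r (minBumpCol n X r c)) r c
          hr1 hrp hck hex1 P1
        have hstep : moveAux n (fuel + 1) X r c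
            = moveAux n fuel (moveAux n fuel X r (minBumpCol n X r c)) r c := by
          simp only [moveAux]; rw [if_neg hb1, if_neg hb2]
        have hstepp : moveAux n (fuel + 1) (patchD p k A kp X) r c
            = moveAux n fuel (moveAux n fuel (patchD p k A kp X) r
                (minBumpCol n X r c)) r c := by
          simp only [moveAux]
          rw [if_neg (by rw [e1, e2, e3, e4]; exact hb1),
            if_neg (by rw [e1, e3]; exact hb2), e4]
        exact ⟨by rw [hstepp, C1, C2, hstep], hstep ▸ P2, hstep ▸ T2⟩

end Stmt19Aux

open Stmt19Aux

open PipeDream in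
/-- with a = max_bump_row_{ij}(D) > h and (p, k) ladder movable,
a < p < i, k = k_{ij}(D), the move M_{aj} commutes with the ladder move L_{pk}. -/
theorem stmt19 (n : ℕ) (w : Equiv.Perm ℕ) (D : PipeDream) (hD : D ∈ RPD n w)
    (i j p : ℕ) (hmov : Movable D i j)
    (ha : hIdx D i j < maxBumpRow n D i j)
    (hlm : LadderMovable n D p (kIdx n D i j))
    (hp1 : maxBumpRow n D i j < p) (hp2 : p < i) :
    move n (ladderMove n D p (kIdx n D i j)) (maxBumpRow n D i j) j =
      ladderMove n (move n D (maxBumpRow n D i j) j) p (kIdx n D i j) := by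
  obtain ⟨stair, -, -⟩ := hD
  obtain ⟨hcross, h0, h01, h02, h03⟩ := hmov
  have t1 : 1 ≤ hIdx D i j := le_trans h01 (le_hIdx h01 h02 h03)
  have hstair_ij := stair i j hcross
  have hi4 : 4 ≤ i := by omega
  have hjn : j + 1 ≤ n := by omega
  have hin : D (i, n) = false := by
    rcases Bool.eq_false_or_eq_true (D (i, n)) with h | h
    · exact absurd ((stair i n h).2.2) (by omega)
    · exact h
  have hKmem := kIdx_mem (n := n) (X := D) (r := i) (c := j)
    ⟨n, by omega, le_refl n, hin⟩
  have hpKc : D (p, kIdx n D i j) = true := hlm.1.1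
  have hK1n : kIdx n D i j + 1 ≤ n := by
    have := (stair p (kIdx n D i j) hpKc).2.2; omega
  have hpn : D (p, n) = false := by
    rcases Bool.eq_false_or_eq_true (D (p, n)) with h | h
    · exact absurd ((stair p n h).2.2) (by omega)
    · exact h
  have hkpmem := kIdx_mem (n := n) (X := D) (r := p) (c := kIdx n D i j)
    ⟨n, by omega, le_refl n, hpn⟩
  obtain ⟨-, hb, hb1, hb2, hb3⟩ := hlm.1
  have hA1 : 1 ≤ hIdx D p (kIdx n D i j) := le_trans hb1 (le_hIdx hb1 hb2 hb3)
  have hAp : hIdx D p (kIdx n D i j) < p := hIdx_lt D (kIdx n D i j) (by omega)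
  obtain ⟨-, -, hAK⟩ := hIdx_mem (X := D) (r := p) (c := kIdx n D i j) (by omega)
  have hPcol : ∀ s, hIdx D p (kIdx n D i j) < s → s < p →
      D (s, kIdx n D i j) = true := by
    intro s hs1 hs2
    rcases Bool.eq_false_or_eq_true (D (s, kIdx n D i j)) with h | h
    · exact h
    · have := le_hIdx (show 1 ≤ s by omega) hs2 h; omega
  have hmemR : (hIdx D p (kIdx n D i j), kIdx n D p (kIdx n D i j)) ∈
      Rect n D p (kIdx n D i j) := by
    simp only [Rect, Finset.mem_Icc, Prod.mk_le_mk]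
    exact ⟨⟨le_refl _, by omega⟩, by omega, le_refl _⟩
  have hAkp : D (hIdx D p (kIdx n D i j), kIdx n D p (kIdx n D i j)) = false :=
    (hlm.2 _ _ hmemR).mpr (Or.inr (Or.inl rfl))
  have hProt : ProtD p (kIdx n D i j) (hIdx D p (kIdx n D i j))
      (kIdx n D p (kIdx n D i j)) D := ⟨hAK, hAkp, hPcol⟩
  obtain ⟨⟨hh1, hh2⟩, qa, hqa1, hqa2, hqa3⟩ :=
    maxBumpRow_mem (n := n) (X := D) (r := i) (c := j) (by omega)
  have hqaj : j < qa := by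
    rcases Nat.lt_or_ge j qa with h | h
    · exact h
    · have hqa_eq : qa = j := by omega
      have hqa3' := hqa3
      rw [hqa_eq] at hqa3'
      have := le_hIdx (show 1 ≤ maxBumpRow n D i j by omega) hh2 hqa3'
      omega
  have hexinit : ∃ q, j < q ∧ q ≤ kIdx n D i j ∧ D (maxBumpRow n D i j, q) = false :=
    ⟨qa, hqaj, hqa2, hqa3⟩
  obtain ⟨C, P, -⟩ := key n p (hIdx D p (kIdx n D i j)) (kIdx n D i j)
    (kIdx n D p (kIdx n D i j)) hAp hkpmem.1 hKmem.2.1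
    ((n + 2) ^ (n + 2)) D (maxBumpRow n D i j) j (by omega) hp1 hKmem.1
    hexinit hProt
  have hE : ladderMove n D p (kIdx n D i j) = patchD p (kIdx n D i j)
      (hIdx D p (kIdx n D i j)) (kIdx n D p (kIdx n D i j)) D := rfl
  have hrowsM : ∀ s t, maxBumpRow n D i j < s →
      moveAux n ((n + 2) ^ (n + 2)) D (maxBumpRow n D i j) j (s, t) = D (s, t) :=
    fun s t hs => moveAux_rows n _ D _ j s t hs
  have h15 : hIdx (moveAux n ((n + 2) ^ (n + 2)) D (maxBumpRow n D i j) j) p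
      (kIdx n D i j) = hIdx D p (kIdx n D i j) := by
    apply le_antisymm
    · apply Finset.sup_le
      intro s hs
      simp only [Finset.mem_filter, Finset.mem_Ico] at hs
      show id s ≤ _
      simp only [id]
      by_contra hcon
      push_neg at hcon
      have := P.2.2 s hcon hs.1.2
      rw [this] at hs
      exact Bool.noConfusion hs.2
    · exact le_hIdx hA1 hAp P.1
  have h16 : kIdx n (moveAux n ((n + 2) ^ (n + 2)) D (maxBumpRow n D i j) j) p
      (kIdx n D i j) = kIdx n D p (kIdx n D i j) := by
    unfold kIdx
    simp only [fun t => hrowsM p t hp1]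
  have h17 : ladderMove n (moveAux n ((n + 2) ^ (n + 2)) D (maxBumpRow n D i j) j)
      p (kIdx n D i j) = patchD p (kIdx n D i j) (hIdx D p (kIdx n D i j))
      (kIdx n D p (kIdx n D i j))
      (moveAux n ((n + 2) ^ (n + 2)) D (maxBumpRow n D i j) j) := by
    funext st
    simp only [ladderMove, patchD, h15, h16]
  show moveAux n ((n + 2) ^ (n + 2)) (ladderMove n D p (kIdx n D i j))
      (maxBumpRow n D i j) j = _
  rw [hE, C, ← h17]
  rfl
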